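/- arXiv:2510.06925 — 5 statements merged into one kernel-verified Lean document; each statement's English description precedes it below -/
import Mathlib

section
/- Let d_1, …, d_m ∈ ℂ^n, let S ⊆ {1,…,m} be nonempty, and let A be the n×|S| complex matrix whose columns are the vectors d_j for j ∈ S. Suppose X is an |S|×n complex matrix satisfying A·X·A = A and (A·X)^H = A·X. Let η ∈ (0,1), let r ∈ ℂ^n be a nonzero vector in the column space of A, and suppose that ‖X d_j‖_1 < 1 − η for every j ∉ S. Let ε ≥ 0 satisfy ε ≤ (η/2)·max_{j∈S} |⟨d_j, r⟩|, and let z : {1,…,m} → ℝ satisfy |z_j − |⟨d_j, r⟩|| ≤ ε for all j ∈ {1,…,m}. Then every index j* attaining max_{j∈{1,…,m}} z_j belongs to S. -/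
/-!
Since `A X` is the orthogonal projection onto the column space of `A`, which contains `r`, every
correlation factors through the correlations with the atoms of `S`:
`⟨d_j, r⟩ = ⟨A X d_j, r⟩ = ∑_{k ∈ S} conj (X d_j)_k ⟨d_k, r⟩`. Hence for `j ∉ S` the exact recovery
condition gives `|⟨d_j, r⟩| < (1 - η) M`, where `M = max_{k ∈ S} |⟨d_k, r⟩| > 0` as `r ≠ 0`. The
margin `η M ≥ 2 ε` survives the perturbation of the correlations by at most `ε`.
-/

open Matrix
open scoped ComplexOrder

namespace Matrix

variable {R : Type*} {m n : Type*} [Fintype m] [Fintype n]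

/-- `X` is a `{1,3}`-generalized inverse of `A`: `A X` is the orthogonal projection onto the
column space of `A`. -/
structure IsLeastSquaresInverse [Mul R] [AddCommMonoid R] [Star R]
    (A : Matrix m n R) (X : Matrix n m R) : Prop where
  mul_mul_self : A * X * A = A
  conjTranspose_mul : (A * X)ᴴ = A * X

theorem IsLeastSquaresInverse.star_dotProduct_mulVec [Semiring R] [StarRing R]
    {A : Matrix m n R} {X : Matrix n m R} (h : A.IsLeastSquaresInverse X) (y : m → R)
    (v : n → R) : star y ⬝ᵥ A *ᵥ v = star (X *ᵥ y) ⬝ᵥ Aᴴ *ᵥ (A *ᵥ v) := by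
  rw [eq_comm, dotProduct_mulVec, ← star_mulVec, mulVec_mulVec, star_mulVec, h.conjTranspose_mul,
    ← dotProduct_mulVec, mulVec_mulVec, h.mul_mul_self]

end Matrix

theorem norm_star_dotProduct_le {R ι : Type*} [Fintype ι] [SeminormedRing R] [StarRing R]
    [NormedStarGroup R] (c w : ι → R) {M : ℝ} (hw : ∀ k, ‖w k‖ ≤ M) :
    ‖star c ⬝ᵥ w‖ ≤ (∑ k, ‖c k‖) * M := by
  rw [Finset.sum_mul]
  refine (norm_sum_le _ _).trans (Finset.sum_le_sum fun k _ => ?_)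
  calc ‖star (c k) * w k‖ ≤ ‖c k‖ * ‖w k‖ := by rw [← norm_star (c k)]; exact norm_mul_le _ _
    _ ≤ ‖c k‖ * M := by gcongr; exact hw k

theorem mem_of_forall_le_of_abs_sub_le {ι : Type*} {S : Set ι} {F z : ι → ℝ} {ε : ℝ} {k j : ι}
    (hgap : ∀ i ∉ S, F i + 2 * ε < F k) (hz : ∀ i, |z i - F i| ≤ ε)
    (hj : ∀ i, z i ≤ z j) : j ∈ S := by
  by_contra hjS
  linarith [hgap j hjS, hj k, (abs_le.mp (hz j)).2, (abs_le.mp (hz k)).1]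

theorem qomp_exact_recovery_step_general {n m : ℕ}
    (d : Fin m → EuclideanSpace ℂ (Fin n))
    (S : Finset (Fin m)) (hS : S.Nonempty)
    (A : Matrix (Fin n) {j : Fin m // j ∈ S} ℂ)
    (hA : ∀ (i : Fin n) (j : {j : Fin m // j ∈ S}), A i j = d j.1 i)
    (X : Matrix {j : Fin m // j ∈ S} (Fin n) ℂ)
    (hAXA : A * X * A = A) (hherm : (A * X)ᴴ = A * X)
    (η : ℝ)
    (r : EuclideanSpace ℂ (Fin n)) (hr0 : r ≠ 0)
    (hrcol : ∃ v : {j : Fin m // j ∈ S} → ℂ, (show EuclideanSpace ℂ (Fin n) from WithLp.toLp 2 (A.mulVec v)) = r)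
    (hERC : ∀ j : Fin m, j ∉ S → ∑ i, ‖X.mulVec (d j) i‖ < 1 - η)
    (ε : ℝ)
    (hε : ε ≤ (η / 2) * S.sup' hS (fun j => ‖(inner ℂ (d j) r : ℂ)‖))
    (z : Fin m → ℝ)
    (hz : ∀ j : Fin m, |z j - ‖(inner ℂ (d j) r : ℂ)‖| ≤ ε)
    (jstar : Fin m) (hjstar : ∀ j : Fin m, z j ≤ z jstar) :
    jstar ∈ S := by
  obtain ⟨v, rfl⟩ := hrcol
  set F : Fin m → ℝ := fun j => ‖(inner ℂ (d j) (WithLp.toLp 2 (A *ᵥ v)) : ℂ)‖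
  set M := S.sup' hS F
  set corr := Aᴴ *ᵥ (A *ᵥ v)
  have hcorr : ∀ k : {j // j ∈ S}, ‖corr k‖ ≤ M := fun k => by
    have hcorrk : corr k = inner ℂ (d k) (WithLp.toLp 2 (A *ᵥ v)) := by
      simp only [corr, EuclideanSpace.inner_eq_star_dotProduct, mulVec, dotProduct,
        conjTranspose_apply, hA, Pi.star_apply, mul_comm]
    exact hcorrk ▸ S.le_sup' F k.2
  have hF : ∀ j, F j = ‖star (X *ᵥ d j) ⬝ᵥ corr‖ := fun j => by
    rw [← IsLeastSquaresInverse.star_dotProduct_mulVec ⟨hAXA, hherm⟩, dotProduct_comm]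
    rfl
  have hM : 0 < M := by
    have hcorr0 : corr ≠ 0 := by
      rw [show corr = (Aᴴ * A) *ᵥ v from mulVec_mulVec .., Ne, conjTranspose_mul_self_mulVec_eq_zero]
      exact fun h => hr0 (by rw [h]; rfl)
    obtain ⟨k, hk⟩ := Function.ne_iff.mp hcorr0
    exact (norm_pos_iff.mpr hk).trans_le (hcorr k)
  obtain ⟨k, -, hk⟩ := S.exists_mem_eq_sup' hS F
  refine mem_of_forall_le_of_abs_sub_le (k := k) (fun j hj => ?_) hz hjstar
  calc F j + 2 * ε ≤ (∑ i, ‖(X *ᵥ d j) i‖) * M + 2 * ε := by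
        rw [hF]; gcongr; exact norm_star_dotProduct_le _ _ hcorr
    _ < (1 - η) * M + η * M :=
        add_lt_add_of_lt_of_le (mul_lt_mul_of_pos_right (hERC j hj) hM) (by linarith)
    _ = F k := by rw [← hk]; ring

/-- Single-iteration exact recovery for QOMP (Theorem "Exact Recovery for QOMP"):
under the η-strengthened exact recovery condition `‖X d_j‖₁ < 1 - η` for all `j ∉ S`
(where `X` is a pseudoinverse-like matrix for the subdictionary `A` whose columns
are `d_j`, `j ∈ S`), greedy selection based on ε-accurate estimates `z` of the
correlations `|⟨d_j, r⟩|` always picks an atom from the optimal support `S`. -/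
theorem qomp_exact_recovery_step {n m : ℕ}
    (d : Fin m → EuclideanSpace ℂ (Fin n))
    (S : Finset (Fin m)) (hS : S.Nonempty)
    (A : Matrix (Fin n) {j : Fin m // j ∈ S} ℂ)
    (hA : ∀ (i : Fin n) (j : {j : Fin m // j ∈ S}), A i j = d j.1 i)
    (X : Matrix {j : Fin m // j ∈ S} (Fin n) ℂ)
    (hAXA : A * X * A = A) (hherm : (A * X)ᴴ = A * X)
    (η : ℝ) (hη : η ∈ Set.Ioo (0 : ℝ) 1)
    (r : EuclideanSpace ℂ (Fin n)) (hr0 : r ≠ 0)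
    (hrcol : ∃ v : {j : Fin m // j ∈ S} → ℂ, (show EuclideanSpace ℂ (Fin n) from WithLp.toLp 2 (A.mulVec v)) = r)
    (hERC : ∀ j : Fin m, j ∉ S → ∑ i, ‖X.mulVec (d j) i‖ < 1 - η)
    (ε : ℝ) (hε0 : 0 ≤ ε)
    (hε : ε ≤ (η / 2) * S.sup' hS (fun j => ‖(inner ℂ (d j) r : ℂ)‖))
    (z : Fin m → ℝ)
    (hz : ∀ j : Fin m, |z j - ‖(inner ℂ (d j) r : ℂ)‖| ≤ ε)
    (jstar : Fin m) (hjstar : ∀ j : Fin m, z j ≤ z jstar) :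
    jstar ∈ S :=
  qomp_exact_recovery_step_general d S hS A hA X hAXA hherm η r hr0 hrcol hERC ε hε z hz jstar
    hjstar
end

section
/- Let A be an n×K complex matrix and let X be a K×n complex matrix satisfying A·X·A = A and (A·X)^H = A·X. Then for every vector r in the column space of A and every ψ ∈ ℂ^n, |⟨ψ, r⟩| ≤ ‖X ψ‖_1 · ‖A^H r‖_∞. -/
/-! Since `A * X` is a Hermitian matrix fixing the column space of `A`,
`⟨ψ, r⟩ = ⟨(A * X) ψ, r⟩ = ⟨X ψ, Aᴴ r⟩`, and Hölder's inequality for `ℓ¹` against `ℓ^∞` bounds the latter. -/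

open Matrix

namespace Matrix

variable {m n R : Type*} [Fintype m] [Fintype n]

theorem star_dotProduct_eq_of_mul_mulVec_eq_self [NonUnitalSemiring R] [StarRing R]
    {A : Matrix m n R} {X : Matrix n m R} (hherm : (A * X)ᴴ = A * X) {r : m → R}
    (hr : (A * X) *ᵥ r = r) (ψ : m → R) : star ψ ⬝ᵥ r = star (X *ᵥ ψ) ⬝ᵥ Aᴴ *ᵥ r := by
  calc star ψ ⬝ᵥ r = star ((A * X)ᴴ *ᵥ ψ) ⬝ᵥ r := by
        conv_lhs => rw [← hr]
        rw [dotProduct_mulVec, star_mulVec, conjTranspose_conjTranspose]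
    _ = star (X *ᵥ ψ) ⬝ᵥ Aᴴ *ᵥ r := by
        rw [hherm, ← mulVec_mulVec, star_mulVec, dotProduct_mulVec]

theorem norm_dotProduct_le_sum_mul_iSup [NonUnitalSeminormedRing R] (w u : n → R) :
    ‖w ⬝ᵥ u‖ ≤ (∑ i, ‖w i‖) * ⨆ i, ‖u i‖ := by
  have hbdd : BddAbove (Set.range fun i => ‖u i‖) := (Set.finite_range _).bddAbove
  calc ‖w ⬝ᵥ u‖ ≤ ∑ i, ‖w i‖ * ‖u i‖ :=
        (norm_sum_le _ _).trans (Finset.sum_le_sum fun i _ => norm_mul_le _ _)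
    _ ≤ ∑ i, ‖w i‖ * ⨆ j, ‖u j‖ :=
        Finset.sum_le_sum fun i _ => mul_le_mul_of_nonneg_left (le_ciSup hbdd i) (norm_nonneg _)
    _ = (∑ i, ‖w i‖) * ⨆ i, ‖u i‖ := (Finset.sum_mul _ _ _).symm

end Matrix

/-- Hölder-type inequality underlying the exact recovery analysis of (Q)OMP:
if `X` satisfies the Moore–Penrose conditions `A·X·A = A` and `(A·X)ᴴ = A·X`
(so that `A·X` is the orthogonal projector onto the column space of `A`), then
for every `r` in the column space of `A` and every `ψ ∈ ℂ^n`,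
`|⟨ψ, r⟩| ≤ ‖X ψ‖₁ · ‖Aᴴ r‖_∞`. -/
theorem holder_pseudoinverse_bound {n K : ℕ}
    (A : Matrix (Fin n) (Fin K) ℂ) (X : Matrix (Fin K) (Fin n) ℂ)
    (hAXA : A * X * A = A) (hherm : (A * X)ᴴ = A * X)
    (r : EuclideanSpace ℂ (Fin n))
    (hrcol : ∃ v : Fin K → ℂ, (show EuclideanSpace ℂ (Fin n) from WithLp.toLp 2 (A.mulVec v)) = r)
    (ψ : EuclideanSpace ℂ (Fin n)) :
    ‖(inner ℂ ψ r : ℂ)‖ ≤ (∑ i, ‖X.mulVec ψ i‖) * (⨆ i, ‖Aᴴ.mulVec r i‖) := by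
  obtain ⟨v, rfl⟩ := hrcol
  have hfix : (A * X) *ᵥ (A *ᵥ v) = A *ᵥ v := by rw [mulVec_mulVec, hAXA]
  rw [EuclideanSpace.inner_eq_star_dotProduct, dotProduct_comm,
    star_dotProduct_eq_of_mul_mulVec_eq_self hherm hfix]
  simpa only [Pi.star_apply, norm_star] using
    norm_dotProduct_le_sum_mul_iSup (star (X *ᵥ ψ)) (Aᴴ *ᵥ (A *ᵥ v))
end

section
/- Let μ > 0 be a real number, let η ∈ [0,1), and let K be a natural number. If K < ((1 − η)/(2 − η))·(1/μ + 1), then 1 − (K − 1)·μ > 0 and K·μ/(1 − (K − 1)·μ) < 1 − η. -/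
/-- Derivation of the incoherence condition for QOMP: if
`K < ((1 - η)/(2 - η))·(1/μ + 1)` for a mutual incoherence `μ > 0` and
`η ∈ [0,1)`, then `1 - (K - 1)·μ > 0` and `K·μ/(1 - (K - 1)·μ) < 1 - η`. -/
theorem incoherence_condition_qomp (μ η : ℝ) (hμ : 0 < μ)
    (hη : η ∈ Set.Ico (0 : ℝ) 1) (K : ℕ)
    (hK : (K : ℝ) < ((1 - η) / (2 - η)) * (1 / μ + 1)) :
    0 < 1 - ((K : ℝ) - 1) * μ ∧ (K : ℝ) * μ / (1 - ((K : ℝ) - 1) * μ) < 1 - η := by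
  obtain ⟨hη0, hη1⟩ := hη
  have h2 : (0:ℝ) < 2 - η := by linarith
  have hfrac : (1 - η) / (2 - η) < 1 := by
    rw [div_lt_one h2]; linarith
  have hk1 : (K : ℝ) < 1 / μ + 1 := by
    calc (K:ℝ) < ((1 - η) / (2 - η)) * (1 / μ + 1) := hK
    _ < 1 * (1 / μ + 1) := by
        apply mul_lt_mul_of_pos_right hfrac
        positivity
    _ = 1 / μ + 1 := one_mul _
  have hpos : 0 < 1 - ((K : ℝ) - 1) * μ := by
    have := mul_lt_mul_of_pos_right hk1 hμ
    rw [add_mul, one_div, inv_mul_cancel₀ (ne_of_gt hμ)] at this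
    nlinarith
  refine ⟨hpos, ?_⟩
  rw [div_lt_iff₀ hpos]
  have key : (K : ℝ) * (2 - η) * μ < (1 - η) * (1 + μ) := by
    rw [div_mul_eq_mul_div, lt_div_iff₀ h2] at hK
    have h1 : 1 / μ * μ = 1 := by field_simp
    nlinarith [mul_lt_mul_of_pos_right hK hμ]
  nlinarith
end

section
/- Let s ∈ ℂ^n with ‖s‖_2 = 1, let A be an n×K complex matrix, and let γ, M > 0 satisfy γ·‖v‖_2 ≤ ‖A v‖_2 ≤ M·‖v‖_2 for all v ∈ ℂ^K. Let ε₀, τ ≥ 0, let x ∈ ℂ^K be nonzero with ‖s − A x‖_2 ≤ ε₀, and let y ∈ ℂ^K satisfy ‖y − x/‖x‖_2‖_2 ≤ τ and A y ≠ 0. Then ‖s − (A y)/‖A y‖_2‖_2 ≤ 2·ε₀ + 2·(M/γ)·τ. -/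
/-! Normalization satisfies `‖normalize a - normalize b‖ ≤ 2‖a - b‖ / ‖a‖`. At `a = s` this makes
`normalize (A x)` a 2ε₀-approximation of `s`. Since normalization forgets positive scalars,
`normalize (A x) = normalize (A (x / ‖x‖))`, and the same inequality at `a = A (x / ‖x‖)`, with
`‖A (x / ‖x‖)‖ ≥ γ` and `‖A (x / ‖x‖) - A y‖ ≤ M τ`, bounds the remaining distance to
`normalize (A y)` by `2 (M / γ) τ`. -/

namespace NormedSpace

variable {V : Type*} [NormedAddCommGroup V] [NormedSpace ℝ V]

lemma norm_smul_sub_normalize_le (c : ℝ) (b : V) : ‖c • b - normalize b‖ ≤ |c * ‖b‖ - 1| := by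
  rcases eq_or_ne b 0 with rfl | hb
  · simp
  have hb' : ‖b‖ ≠ 0 := norm_ne_zero_iff.mpr hb
  refine le_of_eq ?_
  calc ‖c • b - normalize b‖ = |c - ‖b‖⁻¹| * ‖b‖ := by
        rw [normalize, ← sub_smul, norm_smul, Real.norm_eq_abs]
    _ = |c * ‖b‖ - 1| := by
        rw [← abs_norm b, ← abs_mul, abs_norm, sub_mul, inv_mul_cancel₀ hb']

lemma norm_normalize_sub_normalize_le {a : V} (ha : a ≠ 0) (b : V) :
    ‖normalize a - normalize b‖ ≤ 2 * ‖a - b‖ / ‖a‖ := by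
  have ha' : 0 < ‖a‖ := norm_pos_iff.mpr ha
  have h_scale : |‖a‖⁻¹ * ‖b‖ - 1| ≤ ‖a - b‖ / ‖a‖ := by
    rw [inv_mul_eq_div, div_sub_one ha'.ne', abs_div, abs_norm, abs_sub_comm]
    gcongr
    exact abs_norm_sub_norm_le a b
  calc ‖normalize a - normalize b‖
      ≤ ‖normalize a - ‖a‖⁻¹ • b‖ + ‖‖a‖⁻¹ • b - normalize b‖ :=
        norm_sub_le_norm_sub_add_norm_sub _ _ _
    _ ≤ ‖a - b‖ / ‖a‖ + ‖a - b‖ / ‖a‖ := by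
        gcongr
        · rw [normalize, ← smul_sub, norm_smul, norm_inv, norm_norm, inv_mul_eq_div]
        · exact (norm_smul_sub_normalize_le _ b).trans h_scale
    _ = 2 * ‖a - b‖ / ‖a‖ := by ring

lemma norm_sub_normalize_le {s : V} (hs : ‖s‖ = 1) (u : V) :
    ‖s - normalize u‖ ≤ 2 * ‖s - u‖ := by
  have hs0 : s ≠ 0 := norm_ne_zero_iff.mp (by rw [hs]; exact one_ne_zero)
  simpa [normalize_eq_self_of_norm_eq_one hs, hs] using norm_normalize_sub_normalize_le hs0 u

variable {E : Type*} [NormedAddCommGroup E] [NormedSpace ℝ E]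

lemma normalize_map_normalize (T : E →ₗ[ℝ] V) {x : E} (hx : x ≠ 0) :
    normalize (T (normalize x)) = normalize (T x) := by
  rw [← normalize_smul_of_pos (inv_pos.mpr (norm_pos_iff.mpr hx)) (T x), ← map_smul]
  rfl

lemma norm_normalize_map_sub_normalize_map_le (T : E →ₗ[ℝ] V) {γ M : ℝ} (hγ : 0 < γ)
    (hM : 0 ≤ M) (hlow : ∀ v, γ * ‖v‖ ≤ ‖T v‖) (hup : ∀ v, ‖T v‖ ≤ M * ‖v‖)
    {u : E} (hu : ‖u‖ = 1) (y : E) :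
    ‖normalize (T u) - normalize (T y)‖ ≤ 2 * (M / γ) * ‖u - y‖ := by
  have hTu : γ ≤ ‖T u‖ := by simpa [hu] using hlow u
  have hTu0 : T u ≠ 0 := norm_pos_iff.mp (hγ.trans_le hTu)
  calc ‖normalize (T u) - normalize (T y)‖ ≤ 2 * ‖T u - T y‖ / ‖T u‖ :=
        norm_normalize_sub_normalize_le hTu0 _
    _ ≤ 2 * (M * ‖u - y‖) / γ := by
        rw [← map_sub]
        gcongr
        exact hup _
    _ = 2 * (M / γ) * ‖u - y‖ := by ring

theorem norm_sub_normalize_map_le (T : E →ₗ[ℝ] V) {γ M : ℝ} (hγ : 0 < γ) (hM : 0 ≤ M)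
    (hlow : ∀ v, γ * ‖v‖ ≤ ‖T v‖) (hup : ∀ v, ‖T v‖ ≤ M * ‖v‖)
    {s : V} (hs : ‖s‖ = 1) {x : E} (hx : x ≠ 0) (y : E) :
    ‖s - normalize (T y)‖ ≤ 2 * ‖s - T x‖ + 2 * (M / γ) * ‖y - normalize x‖ := by
  calc ‖s - normalize (T y)‖
      ≤ ‖s - normalize (T x)‖ + ‖normalize (T x) - normalize (T y)‖ :=
        norm_sub_le_norm_sub_add_norm_sub _ _ _
    _ ≤ 2 * ‖s - T x‖ + 2 * (M / γ) * ‖y - normalize x‖ := by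
        gcongr
        · exact norm_sub_normalize_le hs _
        · rw [norm_sub_rev y, ← normalize_map_normalize T hx]
          exact norm_normalize_map_sub_normalize_map_le T hγ hM hlow hup (norm_normalize hx) y

end NormedSpace

theorem sparse_coefficients_error_propagation_general {n K : ℕ}
    (s : EuclideanSpace ℂ (Fin n)) (hs : ‖s‖ = 1)
    (A : Matrix (Fin n) (Fin K) ℂ) (γ M : ℝ) (hγ : 0 < γ) (hM : 0 < M)
    (hσ : ∀ v : EuclideanSpace ℂ (Fin K),
      γ * ‖v‖ ≤ ‖(show EuclideanSpace ℂ (Fin n) from WithLp.toLp 2 (A.mulVec v))‖ ∧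
      ‖(show EuclideanSpace ℂ (Fin n) from WithLp.toLp 2 (A.mulVec v))‖ ≤ M * ‖v‖)
    (ε₀ τ : ℝ)
    (x : EuclideanSpace ℂ (Fin K)) (hx : x ≠ 0)
    (hxs : ‖s - (show EuclideanSpace ℂ (Fin n) from WithLp.toLp 2 (A.mulVec x))‖ ≤ ε₀)
    (y : EuclideanSpace ℂ (Fin K)) (hy : ‖y - ‖x‖⁻¹ • x‖ ≤ τ) :
    ‖s - ‖(show EuclideanSpace ℂ (Fin n) from WithLp.toLp 2 (A.mulVec y))‖⁻¹ •
        (show EuclideanSpace ℂ (Fin n) from WithLp.toLp 2 (A.mulVec y))‖ ≤ 2 * ε₀ + 2 * (M / γ) * τ := by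
  have hbound := NormedSpace.norm_sub_normalize_map_le
    ((Matrix.toEuclideanLin A).restrictScalars ℝ) hγ hM.le (fun v => (hσ v).1)
    (fun v => (hσ v).2) hs hx y
  exact hbound.trans (by gcongr; exacts [hxs, hy])

/-- Deterministic error-propagation core of the paper's Corollary "Sparse
coefficients tomography": if the unit vector `s` admits an ε₀-accurate sparse
representation `A x` and `y` is a τ-accurate estimate of the normalized
coefficient vector `x/‖x‖`, then the normalized reconstruction `A y/‖A y‖` is
`(2ε₀ + 2(M/γ)τ)`-accurate, where `γ, M` bound the singular values of `A`. -/
theorem sparse_coefficients_error_propagation {n K : ℕ}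
    (s : EuclideanSpace ℂ (Fin n)) (hs : ‖s‖ = 1)
    (A : Matrix (Fin n) (Fin K) ℂ) (γ M : ℝ) (hγ : 0 < γ) (hM : 0 < M)
    (hσ : ∀ v : EuclideanSpace ℂ (Fin K),
      γ * ‖v‖ ≤ ‖(show EuclideanSpace ℂ (Fin n) from WithLp.toLp 2 (A.mulVec v))‖ ∧
      ‖(show EuclideanSpace ℂ (Fin n) from WithLp.toLp 2 (A.mulVec v))‖ ≤ M * ‖v‖)
    (ε₀ τ : ℝ) (hε₀ : 0 ≤ ε₀) (hτ : 0 ≤ τ)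
    (x : EuclideanSpace ℂ (Fin K)) (hx : x ≠ 0)
    (hxs : ‖s - (show EuclideanSpace ℂ (Fin n) from WithLp.toLp 2 (A.mulVec x))‖ ≤ ε₀)
    (y : EuclideanSpace ℂ (Fin K)) (hy : ‖y - ‖x‖⁻¹ • x‖ ≤ τ)
    (hAy : (show EuclideanSpace ℂ (Fin n) from WithLp.toLp 2 (A.mulVec y)) ≠ 0) :
    ‖s - ‖(show EuclideanSpace ℂ (Fin n) from WithLp.toLp 2 (A.mulVec y))‖⁻¹ •
        (show EuclideanSpace ℂ (Fin n) from WithLp.toLp 2 (A.mulVec y))‖ ≤ 2 * ε₀ + 2 * (M / γ) * τ :=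
  sparse_coefficients_error_propagation_general s hs A γ M hγ hM hσ ε₀ τ x hx hxs y hy
end

section
/- Let w ∈ (0,1) and ε ≥ 0. Let Q : ℝ → ℝ be an odd polynomial such that |Q(x)| ≤ 1 for all x ∈ [−2, 2], and |Q(x) − sign(x)| ≤ ε for all x ∈ [−2, 2] with |x| ≥ w/3. Define the polynomial P(x) = (Q(x + 2w/3) + Q(x − 2w/3))/2. Then: (i) P is an odd polynomial; (ii) |P(x)| ≤ 1 for all x ∈ [−1, 1]; (iii) |P(x) − 1| ≤ ε for all x ∈ [w, 1]; (iv) |P(x) + 1| ≤ ε for all x ∈ [−1, −w]; (v) |P(x)| ≤ ε for all x ∈ [−w/3, w/3]. -/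
/-- Construction in the paper's Lemma "Polynomial approximation of the
antisymmetric step function": from an odd polynomial `Q` approximating the
sign function on `[-2,2]` away from `(-w/3, w/3)` and bounded by 1 on `[-2,2]`,
the polynomial `P(x) = (Q(x + 2w/3) + Q(x - 2w/3))/2` is odd, bounded by 1 on
`[-1,1]`, ε-close to `±1` on `[w,1]` and `[-1,-w]`, and ε-close to 0 on
`[-w/3, w/3]`. -/
theorem antisymmetric_step_polynomial (w ε : ℝ)
    (hw : w ∈ Set.Ioo (0 : ℝ) 1) (hε : 0 ≤ ε)
    (Q : Polynomial ℝ)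
    (hQodd : ∀ x : ℝ, Q.eval (-x) = -Q.eval x)
    (hQbdd : ∀ x ∈ Set.Icc (-2 : ℝ) 2, |Q.eval x| ≤ 1)
    (hQsign : ∀ x ∈ Set.Icc (-2 : ℝ) 2, w / 3 ≤ |x| → |Q.eval x - Real.sign x| ≤ ε)
    (P : Polynomial ℝ)
    (hP : ∀ x : ℝ, P.eval x = (Q.eval (x + 2 * w / 3) + Q.eval (x - 2 * w / 3)) / 2) :
    (∀ x : ℝ, P.eval (-x) = -P.eval x) ∧
    (∀ x ∈ Set.Icc (-1 : ℝ) 1, |P.eval x| ≤ 1) ∧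
    (∀ x ∈ Set.Icc w 1, |P.eval x - 1| ≤ ε) ∧
    (∀ x ∈ Set.Icc (-1 : ℝ) (-w), |P.eval x + 1| ≤ ε) ∧
    (∀ x ∈ Set.Icc (-(w / 3)) (w / 3), |P.eval x| ≤ ε) := by
  obtain ⟨hw0, hw1⟩ := hw
  have hodd : ∀ x : ℝ, P.eval (-x) = -P.eval x := by
    intro x
    have h1 : -x + 2 * w / 3 = -(x - 2 * w / 3) := by ring
    have h2 : -x - 2 * w / 3 = -(x + 2 * w / 3) := by ring
    rw [hP, hP, h1, h2, hQodd, hQodd]; ring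
  have h13 : ∀ x ∈ Set.Icc w (1:ℝ), |P.eval x - 1| ≤ ε := by
    intro x ⟨hx1, hx2⟩
    have hp : x + 2 * w / 3 ∈ Set.Icc (-2:ℝ) 2 := by constructor <;> nlinarith
    have hm : x - 2 * w / 3 ∈ Set.Icc (-2:ℝ) 2 := by constructor <;> nlinarith
    have hpp : (0:ℝ) < x + 2 * w / 3 := by linarith
    have hmp : (0:ℝ) < x - 2 * w / 3 := by linarith
    have e1 := hQsign _ hp (by rw [abs_of_pos hpp]; linarith)
    have e2 := hQsign _ hm (by rw [abs_of_pos hmp]; linarith)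
    rw [Real.sign_of_pos hpp] at e1
    rw [Real.sign_of_pos hmp] at e2
    rw [hP]
    have : P.eval x - 1 = ((Q.eval (x + 2 * w / 3) - 1) + (Q.eval (x - 2 * w / 3) - 1)) / 2 := by
      rw [hP]; ring
    calc |(Q.eval (x + 2 * w / 3) + Q.eval (x - 2 * w / 3)) / 2 - 1|
        = |(Q.eval (x + 2 * w / 3) - 1) + (Q.eval (x - 2 * w / 3) - 1)| / 2 := by
          rw [show (Q.eval (x + 2 * w / 3) + Q.eval (x - 2 * w / 3)) / 2 - 1
              = ((Q.eval (x + 2 * w / 3) - 1) + (Q.eval (x - 2 * w / 3) - 1)) / 2 from by ring,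
            abs_div, abs_two]
      _ ≤ (|Q.eval (x + 2 * w / 3) - 1| + |Q.eval (x - 2 * w / 3) - 1|) / 2 := by
          gcongr; exact abs_add_le _ _
      _ ≤ ε := by linarith
  refine ⟨hodd, ?_, h13, ?_, ?_⟩
  · intro x ⟨hx1, hx2⟩
    have hp := hQbdd (x + 2 * w / 3) (by constructor <;> nlinarith)
    have hm := hQbdd (x - 2 * w / 3) (by constructor <;> nlinarith)
    rw [hP]
    calc |(Q.eval (x + 2 * w / 3) + Q.eval (x - 2 * w / 3)) / 2|
        ≤ (|Q.eval (x + 2 * w / 3)| + |Q.eval (x - 2 * w / 3)|) / 2 := by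
          rw [abs_div, abs_two]; gcongr; exact abs_add_le _ _
      _ ≤ 1 := by linarith
  · intro x ⟨hx1, hx2⟩
    have h := h13 (-x) ⟨by linarith, by linarith⟩
    have : P.eval x + 1 = -(P.eval (-x) - 1) := by rw [hodd]; ring
    rw [this, abs_neg]; exact h
  · intro x ⟨hx1, hx2⟩
    have hp : x + 2 * w / 3 ∈ Set.Icc (-2:ℝ) 2 := by constructor <;> nlinarith
    have hm : x - 2 * w / 3 ∈ Set.Icc (-2:ℝ) 2 := by constructor <;> nlinarith
    have hpp : (0:ℝ) < x + 2 * w / 3 := by linarith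
    have hmn : x - 2 * w / 3 < 0 := by linarith
    have e1 := hQsign _ hp (by rw [abs_of_pos hpp]; linarith)
    have e2 := hQsign _ hm (by rw [abs_of_neg hmn]; linarith)
    rw [Real.sign_of_pos hpp] at e1
    rw [Real.sign_of_neg hmn] at e2
    rw [hP]
    calc |(Q.eval (x + 2 * w / 3) + Q.eval (x - 2 * w / 3)) / 2|
        = |(Q.eval (x + 2 * w / 3) - 1) + (Q.eval (x - 2 * w / 3) - (-1))| / 2 := by
          rw [show (Q.eval (x + 2 * w / 3) + Q.eval (x - 2 * w / 3)) / 2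
              = ((Q.eval (x + 2 * w / 3) - 1) + (Q.eval (x - 2 * w / 3) - (-1))) / 2 from by ring,
            abs_div, abs_two]
      _ ≤ (|Q.eval (x + 2 * w / 3) - 1| + |Q.eval (x - 2 * w / 3) - (-1)|) / 2 := by
          gcongr; exact abs_add_le _ _
      _ ≤ ε := by linarith
end
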